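/- arXiv:1908.01161 — 2 statements merged into one kernel-verified Lean document; each statement's English description precedes it below -/
import Mathlib

section
/- Let Q ⊂ ℝ^n be a bounded measurable set, let N ≥ 1, and let φ : ℝ^n → ℝ satisfy φ(q) > 0 for all q ∈ Q, with φ, q ↦ φ(q)·log(φ(q)), and q ↦ φ(q)·‖p − q‖² (for any p ∈ ℝ^n) integrable on Q. For a configuration P = (p_1,…,p_N) ∈ (ℝ^n)^N, define f_P(q) = max_{1 ≤ i ≤ N} exp(−‖p_i − q‖²), d_KL(φ, f_P) = ∫_Q φ(q) log(φ(q)/f_P(q)) dq, and ℋ(P) = ∫_Q (min_{1 ≤ i ≤ N} ‖p_i − q‖²) φ(q) dq. Then for any two configurations P and P′, d_KL(φ, f_P) ≤ d_KL(φ, f_{P′}) if and only if ℋ(P) ≤ ℋ(P′); in particular, a configuration minimizes d_KL(φ, f_P) over (ℝ^n)^N if and only if it minimizes ℋ(P). -/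
open MeasureTheory

/-- Aggregate agent density `f_P q = max_i exp (-‖P i - q‖²)` for Gaussian
sensing functions with max-aggregation. -/
noncomputable def aggDensity {n N : ℕ} (hN : 1 ≤ N)
    (P : Fin N → EuclideanSpace ℝ (Fin n))
    (q : EuclideanSpace ℝ (Fin n)) : ℝ :=
  Finset.univ.sup' ⟨⟨0, hN⟩, Finset.mem_univ _⟩
    (fun i => Real.exp (-‖P i - q‖ ^ 2))

/-- Kullback–Leibler divergence `d_KL (φ, f_P) = ∫_Q φ log (φ / f_P)`. -/
noncomputable def dKL {n N : ℕ} (hN : 1 ≤ N)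
    (Q : Set (EuclideanSpace ℝ (Fin n)))
    (φ : EuclideanSpace ℝ (Fin n) → ℝ)
    (P : Fin N → EuclideanSpace ℝ (Fin n)) : ℝ :=
  ∫ q in Q, φ q * Real.log (φ q / aggDensity hN P q)

/-- Locational optimization cost `ℋ(P) = ∫_Q (min_i ‖P i - q‖²) φ q dq`. -/
noncomputable def locCost {n N : ℕ} (hN : 1 ≤ N)
    (Q : Set (EuclideanSpace ℝ (Fin n)))
    (φ : EuclideanSpace ℝ (Fin n) → ℝ)
    (P : Fin N → EuclideanSpace ℝ (Fin n)) : ℝ :=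
  ∫ q in Q, (Finset.univ.inf' ⟨⟨0, hN⟩, Finset.mem_univ _⟩
    (fun i => ‖P i - q‖ ^ 2)) * φ q

/-- For a bounded measurable region `Q ⊆ ℝⁿ` and a positive
integrable target density `φ`, comparison of the KL divergence of two
configurations agrees with comparison of their locational optimization costs;
in particular a configuration minimizes `d_KL (φ, f_P)` iff it minimizes
`ℋ(P)`. -/
theorem dKL_le_iff_locCost_le
    {n N : ℕ} (hN : 1 ≤ N)
    (Q : Set (EuclideanSpace ℝ (Fin n)))
    (hQmeas : MeasurableSet Q) (hQbdd : Bornology.IsBounded Q)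
    (φ : EuclideanSpace ℝ (Fin n) → ℝ)
    (hφpos : ∀ q ∈ Q, 0 < φ q)
    (hφint : IntegrableOn φ Q)
    (hφlogint : IntegrableOn (fun q => φ q * Real.log (φ q)) Q)
    (hφnormint : ∀ p : EuclideanSpace ℝ (Fin n),
      IntegrableOn (fun q => φ q * ‖p - q‖ ^ 2) Q) :
    ∀ P P' : Fin N → EuclideanSpace ℝ (Fin n),
      (dKL hN Q φ P ≤ dKL hN Q φ P' ↔ locCost hN Q φ P ≤ locCost hN Q φ P') ∧
      ((∀ P'' : Fin N → EuclideanSpace ℝ (Fin n), dKL hN Q φ P ≤ dKL hN Q φ P'') ↔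
        (∀ P'' : Fin N → EuclideanSpace ℝ (Fin n),
          locCost hN Q φ P ≤ locCost hN Q φ P'')) := by
  -- Key: dKL = ∫ φ log φ + locCost, for every configuration.
  have key : ∀ P : Fin N → EuclideanSpace ℝ (Fin n),
      dKL hN Q φ P = (∫ q in Q, φ q * Real.log (φ q)) + locCost hN Q φ P := by
    intro P
    set ne : (Finset.univ : Finset (Fin N)).Nonempty :=
      ⟨⟨0, hN⟩, Finset.mem_univ _⟩ with hne
    set g : EuclideanSpace ℝ (Fin n) → ℝ :=
      fun q => Finset.univ.inf' ne (fun i => ‖P i - q‖ ^ 2) with hg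
    -- aggDensity = exp (-g)
    have hagg : ∀ q, aggDensity hN P q = Real.exp (-(g q)) := by
      intro q
      apply le_antisymm
      · apply Finset.sup'_le
        intro i _
        apply Real.exp_le_exp.2
        apply neg_le_neg
        exact Finset.inf'_le _ (Finset.mem_univ i)
      · obtain ⟨j, _, hj⟩ := Finset.exists_mem_eq_inf' ne (fun i => ‖P i - q‖ ^ 2)
        have := Finset.le_sup' (fun i => Real.exp (-‖P i - q‖ ^ 2)) (Finset.mem_univ j)
        simpa [aggDensity, hg, hj] using this
    -- pointwise identity on Q
    have hptwise : ∀ q ∈ Q,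
        φ q * Real.log (φ q / aggDensity hN P q)
          = φ q * Real.log (φ q) + g q * φ q := by
      intro q hq
      have hφq := (hφpos q hq).ne'
      have hfq : aggDensity hN P q ≠ 0 := by
        rw [hagg q]; exact (Real.exp_pos _).ne'
      rw [Real.log_div hφq hfq, hagg q, Real.log_exp]
      ring
    -- continuity of g
    have hgcont : Continuous g :=
      Continuous.finset_inf'_apply ne (fun i _ =>
        (continuous_const.sub continuous_id').norm.pow 2)
    -- integrability of g * φ on Q
    have hgint : IntegrableOn (fun q => g q * φ q) Q := by
      apply Integrable.mono' (hφnormint (P ⟨0, hN⟩))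
      · exact (hgcont.aestronglyMeasurable).mul hφint.aestronglyMeasurable
      · filter_upwards [ae_restrict_mem hQmeas] with q hq
        have hφ0 : 0 ≤ φ q := (hφpos q hq).le
        have hg0 : 0 ≤ g q := by
          apply Finset.le_inf'
          intro i _
          positivity
        have hgle : g q ≤ ‖P ⟨0, hN⟩ - q‖ ^ 2 :=
          Finset.inf'_le _ (Finset.mem_univ _)
        rw [Real.norm_eq_abs, abs_of_nonneg (mul_nonneg hg0 hφ0)]
        calc g q * φ q ≤ ‖P ⟨0, hN⟩ - q‖ ^ 2 * φ q :=
              mul_le_mul_of_nonneg_right hgle hφ0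
          _ = φ q * ‖P ⟨0, hN⟩ - q‖ ^ 2 := by ring
    -- split the integral
    have : dKL hN Q φ P
        = ∫ q in Q, (φ q * Real.log (φ q) + g q * φ q) := by
      apply setIntegral_congr_fun hQmeas
      intro q hq
      exact hptwise q hq
    rw [this, integral_add hφlogint hgint]
    rfl
  intro P P'
  constructor
  · constructor
    · intro h
      have := key P ▸ key P' ▸ h
      linarith [key P, key P']
    · intro h
      linarith [key P, key P']
  · constructor
    · intro h P''
      have := h P''
      linarith [key P, key P'']
    · intro h P''
      have := h P''
      linarith [key P, key P'']
end

section
/- Let V ⊂ ℝ^n be a compact measurable set, let φ : ℝ^n → ℝ be continuous, and let γ ∈ ℝ and σ > 0. Define F : ℝ^n → ℝ by F(p) = ∫_V ( φ(q) − γ · exp(−‖p − q‖²/σ²) )² dq. Then F is differentiable at every p ∈ ℝ^n, and its gradient is ∇F(p) = (4γ/σ²) ∫_V exp(−‖p − q‖²/σ²) · ( φ(q) − γ · exp(−‖p − q‖²/σ²) ) · (p − q) dq. -/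
/-! Differentiate under the integral sign. The gradient of the integrand in `p` is jointly
continuous in `(p, q)`, hence bounded on `closedBall p₀ 1 ×ˢ V`, and this constant dominates it
on the compact set `V`. Pointwise, the integrand is `h (‖p - q‖ ^ 2)` for a one-variable `h`, so its
gradient is `h' (‖p - q‖ ^ 2) • 2 (p - q)` by the chain rule. -/

open MeasureTheory Metric

section ParametricGradient

variable {E α : Type*} [NormedAddCommGroup E] [InnerProductSpace ℝ E]

theorem hasGradientAt_iff_hasFDerivAt_innerSL [CompleteSpace E] {f : E → ℝ} {v x : E} :
    HasGradientAt f v x ↔ HasFDerivAt f (innerSL ℝ v) x :=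
  hasGradientAt_iff_hasFDerivAt

theorem HasDerivAt.comp_hasGradientAt [CompleteSpace E] {f : E → ℝ} {h : ℝ → ℝ} {v x : E}
    {h' : ℝ} (hh : HasDerivAt h h' (f x)) (hf : HasGradientAt f v x) :
    HasGradientAt (fun y => h (f y)) (h' • v) x := by
  rw [hasGradientAt_iff_hasFDerivAt_innerSL] at hf
  rw [hasGradientAt_iff_hasFDerivAt_innerSL, map_smul]
  exact hh.comp_hasFDerivAt x hf

theorem hasGradientAt_norm_sub_sq [CompleteSpace E] (q x : E) :
    HasGradientAt (fun y => ‖y - q‖ ^ 2) ((2 : ℝ) • (x - q)) x := by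
  rw [hasGradientAt_iff_hasFDerivAt_innerSL, map_smul]
  simpa [two_smul] using ((hasFDerivAt_id x).sub_const q).norm_sq

variable [MeasurableSpace α] {μ : Measure α}

theorem hasGradientAt_integral_of_dominated_of_gradient_le [CompleteSpace E]
    {F : E → α → ℝ} {F' : E → α → E} {x₀ : E} {s : Set E} {bound : α → ℝ} (hs : s ∈ nhds x₀)
    (hF_meas : ∀ᶠ x in nhds x₀, AEStronglyMeasurable (F x) μ) (hF_int : Integrable (F x₀) μ)
    (hF'_meas : AEStronglyMeasurable (F' x₀) μ)
    (h_bound : ∀ᵐ a ∂μ, ∀ x ∈ s, ‖F' x a‖ ≤ bound a) (bound_integrable : Integrable bound μ)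
    (h_grad : ∀ᵐ a ∂μ, ∀ x ∈ s, HasGradientAt (F · a) (F' x a) x) :
    HasGradientAt (fun x => ∫ a, F x a ∂μ) (∫ a, F' x₀ a ∂μ) x₀ := by
  have hF'_int : Integrable (F' x₀) μ :=
    bound_integrable.mono' hF'_meas (h_bound.mono fun a ha => ha x₀ (mem_of_mem_nhds hs))
  rw [hasGradientAt_iff_hasFDerivAt_innerSL, ← (innerSL ℝ).integral_comp_comm hF'_int]
  refine hasFDerivAt_integral_of_dominated_of_fderiv_le (F' := fun x a => innerSL ℝ (F' x a))
    hs hF_meas hF_int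
    ((innerSL ℝ).continuous.comp_aestronglyMeasurable hF'_meas) ?_ bound_integrable ?_
  · filter_upwards [h_bound] with a ha x hx
    simpa only [innerSL_apply_norm] using ha x hx
  · filter_upwards [h_grad] with a ha x hx
    exact hasGradientAt_iff_hasFDerivAt_innerSL.1 (ha x hx)

theorem hasGradientAt_setIntegral_of_continuous [ProperSpace E] [TopologicalSpace α]
    [T2Space α] [OpensMeasurableSpace α] [IsFiniteMeasureOnCompacts μ]
    {F : E → α → ℝ} {F' : E → α → E} {V : Set α} (hV : IsCompact V)
    (hF : ∀ x, Continuous (F x)) (hF' : Continuous (Function.uncurry F'))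
    (h_grad : ∀ x a, HasGradientAt (F · a) (F' x a) x) (x₀ : E) :
    HasGradientAt (fun x => ∫ a in V, F x a ∂μ) (∫ a in V, F' x₀ a ∂μ) x₀ := by
  obtain ⟨C, hC⟩ := ((isCompact_closedBall x₀ 1).prod hV).exists_bound_of_continuousOn
    hF'.continuousOn
  refine hasGradientAt_integral_of_dominated_of_gradient_le (bound := fun _ => C)
    (closedBall_mem_nhds x₀ one_pos)
    (.of_forall fun x => (hF x).continuousOn.aestronglyMeasurable_of_isCompact hV hV.measurableSet)
    ((hF x₀).continuousOn.integrableOn_compact hV)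
    ((hF'.comp (Continuous.prodMk_right x₀)).continuousOn.aestronglyMeasurable_of_isCompact
      hV hV.measurableSet)
    (ae_restrict_of_forall_mem hV.measurableSet fun a ha x hx => hC (x, a) ⟨hx, ha⟩)
    (integrableOn_const hV.measure_ne_top)
    (.of_forall fun a x _ => h_grad x a)

end ParametricGradient

section GaussianCost

variable {E : Type*} [NormedAddCommGroup E] [InnerProductSpace ℝ E] [CompleteSpace E]

theorem hasDerivAt_sq_sub_mul_exp_neg_div (c γ σ t : ℝ) :
    HasDerivAt (fun s => (c - γ * Real.exp (-s / σ ^ 2)) ^ 2)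
      (2 * γ / σ ^ 2 * (Real.exp (-t / σ ^ 2) * (c - γ * Real.exp (-t / σ ^ 2)))) t := by
  refine (((((hasDerivAt_neg' t).div_const (σ ^ 2)).exp.const_mul γ).const_sub c).fun_pow 2
    ).congr_deriv ?_
  push_cast
  ring

theorem hasGradientAt_sq_sub_mul_gaussian (c γ σ : ℝ) (q x : E) :
    HasGradientAt (fun y => (c - γ * Real.exp (-‖y - q‖ ^ 2 / σ ^ 2)) ^ 2)
      ((4 * γ / σ ^ 2 * (Real.exp (-‖x - q‖ ^ 2 / σ ^ 2) *
        (c - γ * Real.exp (-‖x - q‖ ^ 2 / σ ^ 2)))) • (x - q)) x := by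
  convert (hasDerivAt_sq_sub_mul_exp_neg_div c γ σ _).comp_hasGradientAt
    (hasGradientAt_norm_sub_sq q x) using 1
  rw [smul_smul]
  congr 1
  ring

end GaussianCost

theorem gradient_l2_cell_cost_general
    {n : ℕ} (V : Set (EuclideanSpace ℝ (Fin n)))
    (hVcompact : IsCompact V)
    (φ : EuclideanSpace ℝ (Fin n) → ℝ) (hφcont : Continuous φ)
    (γ σ : ℝ) :
    ∀ p : EuclideanSpace ℝ (Fin n),
      DifferentiableAt ℝ
        (fun p' : EuclideanSpace ℝ (Fin n) =>
          ∫ q in V, (φ q - γ * Real.exp (-‖p' - q‖ ^ 2 / σ ^ 2)) ^ 2) p ∧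
      gradient
        (fun p' : EuclideanSpace ℝ (Fin n) =>
          ∫ q in V, (φ q - γ * Real.exp (-‖p' - q‖ ^ 2 / σ ^ 2)) ^ 2) p =
        (4 * γ / σ ^ 2) •
          ∫ q in V, (Real.exp (-‖p - q‖ ^ 2 / σ ^ 2) *
            (φ q - γ * Real.exp (-‖p - q‖ ^ 2 / σ ^ 2))) • (p - q) := by
  intro p
  have hgrad := hasGradientAt_setIntegral_of_continuous (μ := volume) hVcompact
    (F := fun x q => (φ q - γ * Real.exp (-‖x - q‖ ^ 2 / σ ^ 2)) ^ 2)
    (by fun_prop) (by fun_prop)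
    (fun x q => hasGradientAt_sq_sub_mul_gaussian (φ q) γ σ q x) p
  simp only [mul_smul (4 * γ / σ ^ 2), integral_smul] at hgrad
  exact ⟨hgrad.differentiableAt, hgrad.gradient⟩

/-- For a compact set `V ⊆ ℝⁿ`, a continuous density `φ`,
`γ ∈ ℝ` and `σ > 0`, the function
`F p = ∫_V (φ q - γ · exp (-‖p - q‖²/σ²))² dq` is differentiable everywhere
and its gradient is
`∇F p = (4γ/σ²) ∫_V exp (-‖p - q‖²/σ²) (φ q - γ · exp (-‖p - q‖²/σ²)) (p - q) dq`. -/
theorem gradient_l2_cell_cost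
    {n : ℕ} (V : Set (EuclideanSpace ℝ (Fin n)))
    (hVcompact : IsCompact V) (hVmeas : MeasurableSet V)
    (φ : EuclideanSpace ℝ (Fin n) → ℝ) (hφcont : Continuous φ)
    (γ σ : ℝ) (hσ : 0 < σ) :
    ∀ p : EuclideanSpace ℝ (Fin n),
      DifferentiableAt ℝ
        (fun p' : EuclideanSpace ℝ (Fin n) =>
          ∫ q in V, (φ q - γ * Real.exp (-‖p' - q‖ ^ 2 / σ ^ 2)) ^ 2) p ∧
      gradient
        (fun p' : EuclideanSpace ℝ (Fin n) =>
          ∫ q in V, (φ q - γ * Real.exp (-‖p' - q‖ ^ 2 / σ ^ 2)) ^ 2) p =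
        (4 * γ / σ ^ 2) •
          ∫ q in V, (Real.exp (-‖p - q‖ ^ 2 / σ ^ 2) *
            (φ q - γ * Real.exp (-‖p - q‖ ^ 2 / σ ^ 2))) • (p - q) :=
  gradient_l2_cell_cost_general V hVcompact φ hφcont γ σ
end
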